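/- arXiv:1702.01083 — 7 statements merged into one kernel-verified Lean document; each statement's English description precedes it below -/
import Mathlib

section
/- Let M be a minimum-cost MM between S and T. Let b, c ∈ S and a, d ∈ T be points with a ≤ b < c ≤ d. If the pair (c, a) (matching the S-point c to the T-point a) belongs to M, then the pair (b, d) does not belong to M. -/
open Finset

/-- A many-to-many matching (MM) between point sets `S` and `T` on the real line:
a set of pairs `(s, t)` with `s ∈ S`, `t ∈ T`, covering every point of `S` and of `T`. -/
def IsMM (S T : Finset ℝ) (M : Finset (ℝ × ℝ)) : Prop :=
  (∀ p ∈ M, p.1 ∈ S ∧ p.2 ∈ T) ∧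
  (∀ s ∈ S, ∃ t, (s, t) ∈ M) ∧
  (∀ t ∈ T, ∃ s, (s, t) ∈ M)

/-- The cost of a matching: the sum of the distances of its pairs. -/
noncomputable def mmCost (M : Finset (ℝ × ℝ)) : ℝ := ∑ p ∈ M, |p.1 - p.2|

/-- A minimum-cost MM. -/
def IsMinMM (S T : Finset ℝ) (M : Finset (ℝ × ℝ)) : Prop :=
  IsMM S T M ∧ ∀ M' : Finset (ℝ × ℝ), IsMM S T M' → mmCost M ≤ mmCost M'

/-! The uncrossing argument: replacing the pairs `(c, a)` and `(b, d)` of `M` by `(b, a)` and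
`(c, d)` keeps every point covered, and for `a ≤ b < c ≤ d` it lowers the cost by `2 (c - b)`. -/

lemma mmCost_insert_le (p : ℝ × ℝ) (X : Finset (ℝ × ℝ)) :
    mmCost (insert p X) ≤ |p.1 - p.2| + mmCost X := by
  unfold mmCost
  by_cases hp : p ∈ X
  · rw [insert_eq_of_mem hp]
    linarith [abs_nonneg (p.1 - p.2)]
  · rw [sum_insert hp]

lemma mmCost_erase {p : ℝ × ℝ} {X : Finset (ℝ × ℝ)} (hp : p ∈ X) :
    mmCost (X.erase p) = mmCost X - |p.1 - p.2| := by
  unfold mmCost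
  rw [← sum_erase_add X _ hp]
  ring

noncomputable def exchangePartners (M : Finset (ℝ × ℝ)) (p q : ℝ × ℝ) : Finset (ℝ × ℝ) :=
  insert (q.1, p.2) (insert (p.1, q.2) ((M.erase p).erase q))

section exchangePartners

variable {M : Finset (ℝ × ℝ)} {p q : ℝ × ℝ}

lemma mem_exchangePartners_of_mem {r : ℝ × ℝ} (hr : r ∈ M) (hrp : r ≠ p) (hrq : r ≠ q) :
    r ∈ exchangePartners M p q := by
  simp [exchangePartners, hr, hrp, hrq]

lemma IsMM.exchangePartners {S T : Finset ℝ} (hM : IsMM S T M) (hp : p ∈ M) (hq : q ∈ M) :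
    IsMM S T (exchangePartners M p q) := by
  obtain ⟨hpairs, hcovS, hcovT⟩ := hM
  refine ⟨?_, ?_, ?_⟩
  · intro r hr
    simp only [_root_.exchangePartners, mem_insert, mem_erase] at hr
    rcases hr with rfl | rfl | ⟨-, -, hr⟩
    · exact ⟨(hpairs q hq).1, (hpairs p hp).2⟩
    · exact ⟨(hpairs p hp).1, (hpairs q hq).2⟩
    · exact hpairs r hr
  · intro s hs
    obtain ⟨t, hst⟩ := hcovS s hs
    by_cases hsp : (s, t) = p
    · exact ⟨q.2, by simp [_root_.exchangePartners, ← hsp]⟩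
    by_cases hsq : (s, t) = q
    · exact ⟨p.2, by simp [_root_.exchangePartners, ← hsq]⟩
    exact ⟨t, mem_exchangePartners_of_mem hst hsp hsq⟩
  · intro t ht
    obtain ⟨s, hst⟩ := hcovT t ht
    by_cases hsp : (s, t) = p
    · exact ⟨q.1, by simp [_root_.exchangePartners, ← hsp]⟩
    by_cases hsq : (s, t) = q
    · exact ⟨p.1, by simp [_root_.exchangePartners, ← hsq]⟩
    exact ⟨s, mem_exchangePartners_of_mem hst hsp hsq⟩

lemma mmCost_exchangePartners_le (hp : p ∈ M) (hq : q ∈ M) (hpq : p ≠ q) :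
    mmCost (exchangePartners M p q) ≤
      mmCost M - |p.1 - p.2| - |q.1 - q.2| + |q.1 - p.2| + |p.1 - q.2| := by
  have hq' : q ∈ M.erase p := mem_erase.mpr ⟨hpq.symm, hq⟩
  have hrest : mmCost ((M.erase p).erase q) = mmCost M - |p.1 - p.2| - |q.1 - q.2| := by
    rw [mmCost_erase hq', mmCost_erase hp]
  calc mmCost (exchangePartners M p q)
      ≤ |q.1 - p.2| + (|p.1 - q.2| + mmCost ((M.erase p).erase q)) :=
        (mmCost_insert_le _ _).trans (by gcongr; exact mmCost_insert_le _ _)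
    _ = _ := by rw [hrest]; ring

end exchangePartners

theorem stmt_0_general (S T : Finset ℝ)
    (M : Finset (ℝ × ℝ)) (hM : IsMinMM S T M)
    (b c a d : ℝ)
    (hab : a ≤ b) (hbc : b < c) (hcd : c ≤ d)
    (hca : (c, a) ∈ M) : (b, d) ∉ M := by
  intro hbd
  have hne : ((c, a) : ℝ × ℝ) ≠ (b, d) := fun h => hbc.ne' (Prod.ext_iff.mp h).1
  have hmin := hM.2 _ (hM.1.exchangePartners hca hbd)
  have hcost := mmCost_exchangePartners_le hca hbd hne
  rw [abs_of_nonneg (by linarith : 0 ≤ c - a), abs_of_nonpos (by linarith : b - d ≤ 0),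
    abs_of_nonneg (by linarith : 0 ≤ b - a), abs_of_nonpos (by linarith : c - d ≤ 0)] at hcost
  linarith

/-- In a minimum-cost MM `M`, for `b, c ∈ S` and `a, d ∈ T` with `a ≤ b < c ≤ d`,
if `(c, a) ∈ M` then `(b, d) ∉ M`. -/
theorem stmt_0 (S T : Finset ℝ) (hdisj : Disjoint S T) (hS : S.Nonempty) (hT : T.Nonempty)
    (M : Finset (ℝ × ℝ)) (hM : IsMinMM S T M)
    (b c a d : ℝ) (hb : b ∈ S) (hc : c ∈ S) (ha : a ∈ T) (hd : d ∈ T)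
    (hab : a ≤ b) (hbc : b < c) (hcd : c ≤ d)
    (hca : (c, a) ∈ M) : (b, d) ∉ M :=
  stmt_0_general S T M hM b c a d hab hbc hcd hca
end

section
/- Let M be an MM between S and T, let b, c ∈ S and a, d ∈ T satisfy a ≤ b < c ≤ d, and suppose the pairs (c, a) and (b, d) both belong to M while the pairs (b, a) and (c, d) do not belong to M. Then M' := (M \ {(c, a), (b, d)}) ∪ {(b, a), (c, d)} is an MM between S and T whose cost is strictly smaller than the cost of M. -/
open Finset

theorem IsMM.sdiff_union {S T : Finset ℝ} {M P Q : Finset (ℝ × ℝ)} (hM : IsMM S T M)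
    (hQ : ∀ q ∈ Q, q.1 ∈ S ∧ q.2 ∈ T)
    (hP : ∀ p ∈ P, (∃ t, (p.1, t) ∈ Q) ∧ ∃ s, (s, p.2) ∈ Q) :
    IsMM S T (M \ P ∪ Q) := by
  obtain ⟨hpairs, hScov, hTcov⟩ := hM
  refine ⟨fun p hp => ?_, fun s hs => ?_, fun t ht => ?_⟩
  · rcases mem_union.mp hp with hp | hp
    · exact hpairs p (mem_sdiff.mp hp).1
    · exact hQ p hp
  · obtain ⟨t, hst⟩ := hScov s hs
    by_cases hP' : (s, t) ∈ P
    · obtain ⟨t', ht'⟩ := (hP _ hP').1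
      exact ⟨t', mem_union_right _ ht'⟩
    · exact ⟨t, mem_union_left _ (mem_sdiff.mpr ⟨hst, hP'⟩)⟩
  · obtain ⟨s, hst⟩ := hTcov t ht
    by_cases hP' : (s, t) ∈ P
    · obtain ⟨s', hs'⟩ := (hP _ hP').2
      exact ⟨s', mem_union_right _ hs'⟩
    · exact ⟨s, mem_union_left _ (mem_sdiff.mpr ⟨hst, hP'⟩)⟩

theorem mmCost_sdiff_union {M P Q : Finset (ℝ × ℝ)} (hPM : P ⊆ M) (hMQ : Disjoint M Q) :
    mmCost (M \ P ∪ Q) = mmCost M - mmCost P + mmCost Q := by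
  unfold mmCost
  rw [sum_union (disjoint_of_subset_left sdiff_subset hMQ), sum_sdiff_eq_sub hPM]

theorem mmCost_pair {p q : ℝ × ℝ} (h : p ≠ q) :
    mmCost {p, q} = |p.1 - p.2| + |q.1 - q.2| :=
  sum_pair h

theorem abs_sub_add_abs_sub_lt_of_crossing {a b c d : ℝ} (hab : a ≤ b) (hbc : b < c)
    (hcd : c ≤ d) : |b - a| + |c - d| < |c - a| + |b - d| := by
  rw [abs_of_nonneg (sub_nonneg.mpr hab), abs_of_nonpos (sub_nonpos.mpr hcd),
    abs_of_nonneg (by linarith), abs_of_nonpos (by linarith)]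
  linarith

theorem stmt_1_general (S T : Finset ℝ)
    (M : Finset (ℝ × ℝ)) (hM : IsMM S T M)
    (b c a d : ℝ) (hb : b ∈ S) (hc : c ∈ S) (ha : a ∈ T) (hd : d ∈ T)
    (hab : a ≤ b) (hbc : b < c) (hcd : c ≤ d)
    (hca : (c, a) ∈ M) (hbd : (b, d) ∈ M)
    (hba : (b, a) ∉ M) (hcd' : (c, d) ∉ M) :
    IsMM S T ((M \ {(c, a), (b, d)}) ∪ {(b, a), (c, d)}) ∧
      mmCost ((M \ {(c, a), (b, d)}) ∪ {(b, a), (c, d)}) < mmCost M := by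
  constructor
  · refine hM.sdiff_union (by simp [hb, ha, hc, hd]) ?_
    simp only [mem_insert, mem_singleton, forall_eq_or_imp, forall_eq]
    exact ⟨⟨⟨d, by simp⟩, b, by simp⟩, ⟨a, by simp⟩, c, by simp⟩
  · have hremoved : ({(c, a), (b, d)} : Finset (ℝ × ℝ)) ⊆ M := insert_subset hca (by simpa)
    have hadded : Disjoint M {(b, a), (c, d)} := by simp [hba, hcd']
    rw [mmCost_sdiff_union hremoved hadded, mmCost_pair (by simp [hbc.ne']),
      mmCost_pair (by simp [hbc.ne])]
    linarith [abs_sub_add_abs_sub_lt_of_crossing hab hbc hcd]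

/-- Swapping the crossing pairs `(c, a)` and `(b, d)` for `(b, a)` and `(c, d)`
(when the latter are absent) yields an MM of strictly smaller cost. -/
theorem stmt_1 (S T : Finset ℝ) (hdisj : Disjoint S T) (hS : S.Nonempty) (hT : T.Nonempty)
    (M : Finset (ℝ × ℝ)) (hM : IsMM S T M)
    (b c a d : ℝ) (hb : b ∈ S) (hc : c ∈ S) (ha : a ∈ T) (hd : d ∈ T)
    (hab : a ≤ b) (hbc : b < c) (hcd : c ≤ d)
    (hca : (c, a) ∈ M) (hbd : (b, d) ∈ M)
    (hba : (b, a) ∉ M) (hcd' : (c, d) ∉ M) :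
    IsMM S T ((M \ {(c, a), (b, d)}) ∪ {(b, a), (c, d)}) ∧
      mmCost ((M \ {(c, a), (b, d)}) ∪ {(b, a), (c, d)}) < mmCost M :=
  stmt_1_general S T M hM b c a d hb hc ha hd hab hbc hcd hca hbd hba hcd'
end

section
/- Let M be a minimum-cost MM between S and T. Then M contains no pair (a, d) with a ∈ S and d ∈ T for which there exist b ∈ T and c ∈ S with a < b < c < d. -/
open Finset

/-! If `(a, d) ∈ M`, `b ∈ T` and `c ∈ S`, then replacing the pair `(a, d)` by the two pairs
`(a, b)` and `(c, d)` still covers `a` and `d`, so minimality gives `|a - d| ≤ |a - b| + |c - d|`.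
For `a < b < c < d` this reads `d - a ≤ (b - a) + (d - c)`, i.e. `c ≤ b`, a contradiction. -/

lemma mmCost_insert_le_s2 (x : ℝ × ℝ) (M : Finset (ℝ × ℝ)) :
    mmCost (insert x M) ≤ |x.1 - x.2| + mmCost M := by
  unfold mmCost
  by_cases hx : x ∈ M
  · rw [insert_eq_self.2 hx]
    linarith [abs_nonneg (x.1 - x.2)]
  · rw [sum_insert hx]

lemma mmCost_eq_add_erase {M : Finset (ℝ × ℝ)} {x : ℝ × ℝ} (hx : x ∈ M) :
    mmCost M = |x.1 - x.2| + mmCost (M.erase x) :=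
  (add_sum_erase M _ hx).symm

lemma IsMM.insert_insert_erase {S T : Finset ℝ} {M : Finset (ℝ × ℝ)} (hM : IsMM S T M)
    {a b c d : ℝ} (had : (a, d) ∈ M) (hb : b ∈ T) (hc : c ∈ S) :
    IsMM S T (insert (a, b) (insert (c, d) (M.erase (a, d)))) := by
  obtain ⟨hMem, hScov, hTcov⟩ := hM
  obtain ⟨ha, hd⟩ := hMem _ had
  refine ⟨?_, fun s hs => ?_, fun t ht => ?_⟩
  · simp only [mem_insert, mem_erase]
    rintro p (rfl | rfl | ⟨-, hp⟩)
    exacts [⟨ha, hb⟩, ⟨hc, hd⟩, hMem p hp]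
  · obtain ⟨t, hst⟩ := hScov s hs
    by_cases h : (s, t) = (a, d)
    · obtain ⟨rfl, -⟩ := Prod.mk.inj h
      exact ⟨b, mem_insert_self _ _⟩
    · exact ⟨t, by simp [h, hst]⟩
  · obtain ⟨s, hst⟩ := hTcov t ht
    by_cases h : (s, t) = (a, d)
    · obtain ⟨-, rfl⟩ := Prod.mk.inj h
      exact ⟨c, by simp⟩
    · exact ⟨s, by simp [h, hst]⟩

lemma IsMinMM.abs_sub_le {S T : Finset ℝ} {M : Finset (ℝ × ℝ)} (hM : IsMinMM S T M)
    {a b c d : ℝ} (had : (a, d) ∈ M) (hb : b ∈ T) (hc : c ∈ S) :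
    |a - d| ≤ |a - b| + |c - d| := by
  have hmin := hM.2 _ (hM.1.insert_insert_erase had hb hc)
  have hcd := mmCost_insert_le_s2 (c, d) (M.erase (a, d))
  have hab := mmCost_insert_le_s2 (a, b) (insert (c, d) (M.erase (a, d)))
  rw [mmCost_eq_add_erase had] at hmin
  linarith

theorem stmt_2_general (S T : Finset ℝ)
    (M : Finset (ℝ × ℝ)) (hM : IsMinMM S T M)
    (a d : ℝ)
    (h : ∃ b ∈ T, ∃ c ∈ S, a < b ∧ b < c ∧ c < d) :
    (a, d) ∉ M := by
  obtain ⟨b, hb, c, hc, hab, hbc, hcd⟩ := h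
  intro had
  have key := hM.abs_sub_le had hb hc
  rw [abs_of_neg (by linarith : a - d < 0), abs_of_neg (by linarith : a - b < 0),
    abs_of_neg (by linarith : c - d < 0)] at key
  linarith

/-- A minimum-cost MM contains no pair `(a, d)` with `a ∈ S`, `d ∈ T` for which
there exist `b ∈ T` and `c ∈ S` with `a < b < c < d`. -/
theorem stmt_2 (S T : Finset ℝ) (hdisj : Disjoint S T) (hS : S.Nonempty) (hT : T.Nonempty)
    (M : Finset (ℝ × ℝ)) (hM : IsMinMM S T M)
    (a d : ℝ) (ha : a ∈ S) (hd : d ∈ T)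
    (h : ∃ b ∈ T, ∃ c ∈ S, a < b ∧ b < c ∧ c < d) :
    (a, d) ∉ M :=
  stmt_2_general S T M hM a d h
end

section
/- Let S = {a_1 < a_2 < … < a_s} and T = {b_1 < b_2 < … < b_t} be finite sets of reals with a_s < b_1 and 1 ≤ t ≤ s. Then the minimum of the cost over all MMs between S and T equals ∑_{j=1}^{s} (b_1 − a_j) + ∑_{j=1}^{t} (b_j − b_1). -/
open Finset

/-!
Every point of `S` lies left of `b_1` and every point of `T` right of it, so each pair `(x, y)`
costs `(b_1 - x) + (y - b_1)`. Since every point occurs in some pair, the cost of any MM is at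
least `∑_{x ∈ S} (b_1 - x) + ∑_{y ∈ T} (y - b_1)`. The bound is attained by matching each `a_j`
to a single point of `T`: the last `t` points of `S` to `b_1, …, b_t` in order, all the others
to `b_1`.
-/

open Function

section Separated

variable {S T : Finset ℝ} {M : Finset (ℝ × ℝ)}

lemma IsMM.image_fst (h : IsMM S T M) : M.image Prod.fst = S := by
  ext x
  simp only [mem_image]
  constructor
  · rintro ⟨p, hp, rfl⟩
    exact (h.1 p hp).1
  · intro hx
    obtain ⟨y, hy⟩ := h.2.1 x hx
    exact ⟨_, hy, rfl⟩

lemma IsMM.image_snd (h : IsMM S T M) : M.image Prod.snd = T := by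
  ext y
  simp only [mem_image]
  constructor
  · rintro ⟨p, hp, rfl⟩
    exact (h.1 p hp).2
  · intro hy
    obtain ⟨x, hx⟩ := h.2.2 y hy
    exact ⟨_, hx, rfl⟩

lemma abs_sub_eq_of_le_of_le {x y c : ℝ} (hx : x ≤ c) (hy : c ≤ y) :
    |x - y| = (c - x) + (y - c) := by
  rw [abs_of_nonpos (by linarith)]
  ring

theorem IsMM.sum_le_mmCost {c : ℝ} (h : IsMM S T M) (hS : ∀ x ∈ S, x ≤ c)
    (hT : ∀ y ∈ T, c ≤ y) :
    ∑ x ∈ S, (c - x) + ∑ y ∈ T, (y - c) ≤ mmCost M := by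
  have hcost : mmCost M = ∑ p ∈ M, (c - p.1) + ∑ p ∈ M, (p.2 - c) := by
    rw [mmCost, ← sum_add_distrib]
    exact sum_congr rfl fun p hp =>
      abs_sub_eq_of_le_of_le (hS _ (h.1 p hp).1) (hT _ (h.1 p hp).2)
  rw [hcost]
  gcongr
  · calc ∑ x ∈ S, (c - x) = ∑ x ∈ M.image Prod.fst, (c - x) := by rw [h.image_fst]
      _ ≤ ∑ p ∈ M, (c - p.1) :=
        sum_image_le_of_nonneg fun x hx => sub_nonneg.2 (hS x (h.image_fst ▸ hx))
  · calc ∑ y ∈ T, (y - c) = ∑ y ∈ M.image Prod.snd, (y - c) := by rw [h.image_snd]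
      _ ≤ ∑ p ∈ M, (p.2 - c) :=
        sum_image_le_of_nonneg fun y hy => sub_nonneg.2 (hT y (h.image_snd ▸ hy))

end Separated

section Graph

variable {ι κ : Type*} [Fintype ι] (a : ι → ℝ) (b : κ → ℝ) (g : ι → κ)

noncomputable def graphMM : Finset (ℝ × ℝ) := univ.image fun i => (a i, b (g i))

variable {a b g}

lemma isMM_graphMM [Fintype κ] (hg : Surjective g) :
    IsMM (univ.image a) (univ.image b) (graphMM a b g) := by
  refine ⟨?_, ?_, ?_⟩
  · simp only [graphMM, forall_mem_image, mem_univ, forall_const]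
    exact fun i => ⟨mem_image_of_mem a (mem_univ i), mem_image_of_mem b (mem_univ (g i))⟩
  · simp only [forall_mem_image, mem_univ, forall_const]
    exact fun i => ⟨b (g i), mem_image_of_mem _ (mem_univ i)⟩
  · simp only [forall_mem_image, mem_univ, forall_const]
    intro k
    obtain ⟨i, rfl⟩ := hg k
    exact ⟨a i, mem_image_of_mem _ (mem_univ i)⟩

lemma mmCost_graphMM (ha : Injective a) : mmCost (graphMM a b g) = ∑ i, |a i - b (g i)| :=
  sum_image fun _ _ _ _ h => ha (Prod.ext_iff.1 h).1

end Graph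

/-- Case 0 with `i ≤ s`: for sorted sets `S = {a_1 < … < a_s}` and
`T = {b_1 < … < b_t}` entirely to the right of `S`, with `1 ≤ t ≤ s`, the minimum
MM cost is `∑_{j=1}^s (b_1 - a_j) + ∑_{j=1}^t (b_j - b_1)`. -/
theorem stmt_6 (s t : ℕ) (hs : 0 < s) (ht : 0 < t) (hts : t ≤ s)
    (a : Fin s → ℝ) (b : Fin t → ℝ) (ha : StrictMono a) (hb : StrictMono b)
    (hab : a ⟨s - 1, Nat.sub_lt hs one_pos⟩ < b ⟨0, ht⟩) :
    IsLeast {c : ℝ | ∃ M : Finset (ℝ × ℝ),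
        IsMM (Finset.univ.image a) (Finset.univ.image b) M ∧ mmCost M = c}
      (∑ j : Fin s, (b ⟨0, ht⟩ - a j) + ∑ j : Fin t, (b j - b ⟨0, ht⟩)) := by
  set b₀ := b ⟨0, ht⟩
  have ha_le : ∀ j, a j ≤ b₀ := fun j =>
    (ha.monotone (Fin.le_def.2 (Nat.le_sub_one_of_lt j.isLt))).trans hab.le
  have hb_ge : ∀ i, b₀ ≤ b i := fun i => hb.monotone (Fin.le_def.2 (Nat.zero_le _))
  refine ⟨?_, ?_⟩
  · obtain ⟨k, rfl⟩ := Nat.exists_eq_add_of_le' hts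
    let g : Fin (k + t) → Fin t := Fin.addCases (fun _ => ⟨0, ht⟩) id
    refine ⟨graphMM a b g, isMM_graphMM fun i => ⟨Fin.natAdd k i, Fin.addCases_right i⟩, ?_⟩
    calc mmCost (graphMM a b g)
        = ∑ j, ((b₀ - a j) + (b (g j) - b₀)) := by
          rw [mmCost_graphMM ha.injective]
          exact sum_congr rfl fun j _ => abs_sub_eq_of_le_of_le (ha_le j) (hb_ge (g j))
      _ = ∑ j, (b₀ - a j) + ∑ i, (b i - b₀) := by
          rw [sum_add_distrib, Fin.sum_univ_add (fun j => b (g j) - b₀)]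
          simp only [g, Fin.addCases_left, Fin.addCases_right, id, b₀, sub_self, sum_const_zero,
            zero_add]
  · rintro c ⟨M, hM, rfl⟩
    rw [← sum_image fun x _ y _ h => ha.injective h,
      ← sum_image (f := fun y => y - b₀) fun x _ y _ h => hb.injective h]
    exact hM.sum_le_mmCost (forall_mem_image.2 fun j _ => ha_le j)
      (forall_mem_image.2 fun i _ => hb_ge i)
end

section
/- Let S = {a_1 < a_2 < … < a_s} and T = {b_1 < b_2 < … < b_t} be finite sets of reals with a_s < b_1 and t > s ≥ 1. Then the minimum of the cost over all MMs between S and T equals (t − s)·(b_1 − a_s) + ∑_{j=1}^{s} (b_1 − a_j) + ∑_{j=1}^{t} (b_j − b_1). -/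
open Finset

/-!
Every pair `(x, y)` of an MM has `x ≤ α := a_s < β := b_1 ≤ y`, so its cost splits as
`(y - β) + (β - x)`. Since every point of `T` is matched, the first parts sum to at least
`∑ (b_j - β)`. Since every point of `S` is matched and the MM has at least `t` pairs, the second
parts sum to at least `∑ (β - a_j)` plus `t - s` further terms, each at least `β - α`.
Matching `b_j` with `a_j` for `j ≤ s` and with `a_s` for `j > s` attains both bounds.
-/

theorem sum_add_card_sub_mul_le_sum_comp {ι α : Type*} [DecidableEq α] {M : Finset ι}
    {S : Finset α} {π : ι → α} (hmaps : Set.MapsTo π M S) (hsurj : Set.SurjOn π M S)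
    {f : α → ℝ} {c : ℝ} (hc : ∀ x ∈ S, c ≤ f x) :
    ∑ x ∈ S, f x + ((#M : ℝ) - #S) * c ≤ ∑ p ∈ M, f (π p) := by
  have hfiber : ∀ x ∈ S, (1 : ℝ) ≤ #{p ∈ M | π p = x} := by
    intro x hx
    obtain ⟨p, hp, hpx⟩ := hsurj hx
    exact_mod_cast card_pos.2 ⟨p, mem_filter.2 ⟨hp, hpx⟩⟩
  have hsum : ∑ p ∈ M, f (π p) = ∑ x ∈ S, (#{p ∈ M | π p = x} : ℝ) * f x := by
    rw [← sum_fiberwise_of_maps_to hmaps]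
    refine sum_congr rfl fun x _ => ?_
    rw [sum_congr rfl fun p hp => congrArg f (mem_filter.1 hp).2, sum_const, nsmul_eq_mul]
  calc ∑ x ∈ S, f x + ((#M : ℝ) - #S) * c
      = ∑ x ∈ S, (f x + ((#{p ∈ M | π p = x} : ℝ) - 1) * c) := by
        rw [sum_add_distrib, ← sum_mul, sum_sub_distrib, card_eq_sum_card_fiberwise hmaps]
        simp
    _ ≤ ∑ x ∈ S, (#{p ∈ M | π p = x} : ℝ) * f x :=
        sum_le_sum fun x hx => by nlinarith [hfiber x hx, hc x hx]
    _ = ∑ p ∈ M, f (π p) := hsum.symm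

theorem IsMM.le_mmCost {S T : Finset ℝ} {M : Finset (ℝ × ℝ)} (hM : IsMM S T M) {α β : ℝ}
    (hα : ∀ x ∈ S, x ≤ α) (hαβ : α ≤ β) (hβ : ∀ y ∈ T, β ≤ y) :
    ((#T : ℝ) - #S) * (β - α) + ∑ x ∈ S, (β - x) + ∑ y ∈ T, (y - β) ≤ mmCost M := by
  obtain ⟨hmem, hS, hT⟩ := hM
  have hsurjS : Set.SurjOn Prod.fst M S := fun x hx =>
    let ⟨y, hxy⟩ := hS x hx; ⟨(x, y), hxy, rfl⟩
  have hsurjT : Set.SurjOn Prod.snd M T := fun y hy =>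
    let ⟨x, hxy⟩ := hT y hy; ⟨(x, y), hxy, rfl⟩
  have hfst := sum_add_card_sub_mul_le_sum_comp (f := (β - ·)) (c := β - α)
    (fun p hp => (hmem p hp).1) hsurjS fun x hx => by linarith [hα x hx]
  have hsnd := sum_add_card_sub_mul_le_sum_comp (f := (· - β)) (c := 0)
    (fun p hp => (hmem p hp).2) hsurjT fun y hy => by linarith [hβ y hy]
  have hcard : (#T : ℝ) ≤ #M := by exact_mod_cast card_le_card_of_surjOn _ hsurjT
  have hcost : mmCost M = ∑ p ∈ M, (β - p.1) + ∑ p ∈ M, (p.2 - β) := by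
    rw [mmCost, ← sum_add_distrib]
    refine sum_congr rfl fun p hp => ?_
    rw [abs_of_nonpos (by linarith [hα _ (hmem p hp).1, hβ _ (hmem p hp).2])]
    ring
  rw [hcost]
  nlinarith

theorem mmCost_image_pair {n : ℕ} (a b : Fin n → ℝ) (hb : Function.Injective b)
    (hab : ∀ j, a j ≤ b j) :
    mmCost (univ.image fun j => (a j, b j)) = ∑ j, (b j - a j) := by
  rw [mmCost, sum_image fun i _ j _ h => hb (congrArg Prod.snd h)]
  exact sum_congr rfl fun j _ => by rw [abs_sub_comm, abs_of_nonneg (sub_nonneg.2 (hab j))]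

theorem isMM_image_append {s k : ℕ} (a : Fin s → ℝ) (b : Fin (s + k) → ℝ) (i₀ : Fin s) :
    IsMM (univ.image a) (univ.image b)
      (univ.image fun j => (Fin.append a (fun _ : Fin k => a i₀) j, b j)) := by
  refine ⟨?_, ?_, ?_⟩
  · simp only [mem_image, mem_univ, true_and, forall_exists_index]
    rintro _ j rfl
    refine ⟨?_, j, rfl⟩
    induction j using Fin.addCases <;> simp
  · simp only [mem_image, mem_univ, true_and, forall_exists_index]
    rintro _ i rfl
    exact ⟨b (Fin.castAdd k i), Fin.castAdd k i, by simp⟩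
  · simp only [mem_image, mem_univ, true_and, forall_exists_index]
    rintro _ j rfl
    exact ⟨_, j, rfl⟩

theorem mmCost_image_append {s k : ℕ} (a : Fin s → ℝ) (b : Fin (s + k) → ℝ)
    (hb : Function.Injective b) {α β : ℝ} (hα : ∀ i, a i ≤ α) (hαβ : α ≤ β)
    (hβ : ∀ j, β ≤ b j) :
    mmCost (univ.image fun j => (Fin.append a (fun _ : Fin k => α) j, b j)) =
      k * (β - α) + ∑ i, (β - a i) + ∑ j, (b j - β) := by
  set a' := Fin.append a (fun _ : Fin k => α)
  have ha' : ∀ j, a' j ≤ α := fun j => by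
    induction j using Fin.addCases <;>
      simp only [a', Fin.append_left, Fin.append_right, hα, le_refl]
  have hsplit : ∑ j, (β - a' j) = ∑ i, (β - a i) + k * (β - α) := by
    simp only [a', Fin.sum_univ_add, Fin.append_left, Fin.append_right, sum_const, card_univ,
      Fintype.card_fin, nsmul_eq_mul]
  rw [mmCost_image_pair a' b hb fun j => (ha' j).trans (hαβ.trans (hβ j)),
    add_comm ((k : ℝ) * _), ← hsplit, ← sum_add_distrib]
  exact sum_congr rfl fun _ _ => by ring

/-- Case 0 with `i > s`: for sorted sets `S = {a_1 < … < a_s}` and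
`T = {b_1 < … < b_t}` entirely to the right of `S`, with `t > s ≥ 1`, the minimum
MM cost is `(t - s)·(b_1 - a_s) + ∑_{j=1}^s (b_1 - a_j) + ∑_{j=1}^t (b_j - b_1)`. -/
theorem stmt_7 (s t : ℕ) (hs : 0 < s) (hst : s < t)
    (a : Fin s → ℝ) (b : Fin t → ℝ) (ha : StrictMono a) (hb : StrictMono b)
    (hab : a ⟨s - 1, Nat.sub_lt hs one_pos⟩ < b ⟨0, Nat.lt_of_lt_of_le hs hst.le⟩) :
    IsLeast {c : ℝ | ∃ M : Finset (ℝ × ℝ),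
        IsMM (Finset.univ.image a) (Finset.univ.image b) M ∧ mmCost M = c}
      (((t : ℝ) - (s : ℝ)) *
          (b ⟨0, Nat.lt_of_lt_of_le hs hst.le⟩ - a ⟨s - 1, Nat.sub_lt hs one_pos⟩) +
        ∑ j : Fin s, (b ⟨0, Nat.lt_of_lt_of_le hs hst.le⟩ - a j) +
        ∑ j : Fin t, (b j - b ⟨0, Nat.lt_of_lt_of_le hs hst.le⟩)) := by
  obtain ⟨k, rfl⟩ := Nat.exists_eq_add_of_le hst.le
  set α := a ⟨s - 1, Nat.sub_lt hs one_pos⟩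
  set β := b ⟨0, Nat.lt_of_lt_of_le hs hst.le⟩
  have hα : ∀ i, a i ≤ α := fun i => ha.monotone (Fin.le_def.2 (Nat.le_sub_one_of_lt i.2))
  have hβ : ∀ j, β ≤ b j := fun j => hb.monotone (Fin.le_def.2 (Nat.zero_le _))
  constructor
  · exact ⟨_, isMM_image_append a b ⟨s - 1, Nat.sub_lt hs one_pos⟩,
      (mmCost_image_append a b hb.injective hα hab.le hβ).trans (by push_cast; ring)⟩
  · rintro _ ⟨M, hM, rfl⟩
    have hcardS : #(univ.image a) = s := by simp [card_image_of_injective _ ha.injective]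
    have hcardT : #(univ.image b) = s + k := by simp [card_image_of_injective _ hb.injective]
    have := hM.le_mmCost (α := α) (β := β) (by simpa using hα) hab.le (by simpa using hβ)
    rwa [hcardS, hcardT, sum_image ha.injective.injOn, sum_image hb.injective.injOn] at this
end

section
/- Let M be a minimum-cost OMMD between S and T. Let a, c ∈ S and b, d ∈ T satisfy a ≤ b < c ≤ d. If the pair (a, d) belongs to M, then (a, b) belongs to M or (c, d) belongs to M (or both). -/
open Finset

/-- A many-to-many matching with demands (OMMD) between point sets `S` and `T`
on the real line with demand functions `α` (on `S`) and `β` (on `T`):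
a set of pairs `(s, t)` with `s ∈ S`, `t ∈ T` such that every `s ∈ S` occurs in
at least `α s` pairs and every `t ∈ T` occurs in at least `β t` pairs. -/
def IsOMMD (S T : Finset ℝ) (α β : ℝ → ℕ) (M : Finset (ℝ × ℝ)) : Prop :=
  (∀ p ∈ M, p.1 ∈ S ∧ p.2 ∈ T) ∧
  (∀ s ∈ S, α s ≤ (M.filter (fun p => p.1 = s)).card) ∧
  (∀ t ∈ T, β t ≤ (M.filter (fun p => p.2 = t)).card)

/-- A minimum-cost OMMD. -/
def IsMinOMMD (S T : Finset ℝ) (α β : ℝ → ℕ) (M : Finset (ℝ × ℝ)) : Prop :=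
  IsOMMD S T α β M ∧ ∀ M' : Finset (ℝ × ℝ), IsOMMD S T α β M' → mmCost M ≤ mmCost M'

/-! Replacing the edge `(a, d)` by `(a, b)` and `(c, d)` keeps every demand satisfied and changes
the cost by `(b - a) + (d - c) - (d - a) = b - c < 0`, contradicting minimality. -/

noncomputable def exchange (M : Finset (ℝ × ℝ)) (s t s' t' : ℝ) : Finset (ℝ × ℝ) :=
  insert (s, t') (insert (s', t) (M.erase (s, t)))

theorem card_filter_le_card_filter_of_exchange {ι : Type*} [DecidableEq ι] {M M' : Finset ι}
    {P : ι → Prop} [DecidablePred P] {p q : ι} (hq : q ∉ M) (hqM' : q ∈ M')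
    (hsub : M.erase p ⊆ M') (hP : P p → P q) : #(M.filter P) ≤ #(M'.filter P) := by
  let f : ι → ι := fun r => if r = p then q else r
  have hmaps : Set.MapsTo f (M.filter P) (M'.filter P) := by
    intro r hr
    simp only [coe_filter, Set.mem_ofPred_eq] at hr
    by_cases hrp : r = p
    · subst hrp
      simpa [f] using ⟨hqM', hP hr.2⟩
    · simpa [f, hrp] using ⟨hsub (mem_erase.mpr ⟨hrp, hr.1⟩), hr.2⟩
  have hinj : Set.InjOn f (M.filter P) := by
    intro r hr r' hr' hrr'
    simp only [coe_filter, Set.mem_ofPred_eq] at hr hr'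
    by_cases hrp : r = p <;> by_cases hr'p : r' = p <;> simp only [f, hrp, hr'p, if_true,
      if_false] at hrr'
    · rw [hrp, hr'p]
    · exact absurd (hrr' ▸ hr'.1) hq
    · exact absurd (hrr' ▸ hr.1) hq
    · exact hrr'
  exact card_le_card_of_injOn f hmaps hinj

theorem isOMMD_exchange {S T : Finset ℝ} {α β : ℝ → ℕ} {M : Finset (ℝ × ℝ)}
    (hM : IsOMMD S T α β M) {s t s' t' : ℝ} (hst : (s, t) ∈ M) (hs' : s' ∈ S) (ht' : t' ∈ T)
    (hst' : (s, t') ∉ M) (hs't : (s', t) ∉ M) : IsOMMD S T α β (exchange M s t s' t') := by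
  obtain ⟨hmem, hSdeg, hTdeg⟩ := hM
  have hsub : M.erase (s, t) ⊆ exchange M s t s' t' :=
    (subset_insert _ _).trans (subset_insert _ _)
  refine ⟨?_, fun x hx => ?_, fun y hy => ?_⟩
  · intro p hp
    rcases mem_insert.mp hp with rfl | hp
    · exact ⟨(hmem _ hst).1, ht'⟩
    rcases mem_insert.mp hp with rfl | hp
    · exact ⟨hs', (hmem _ hst).2⟩
    · exact hmem p (mem_of_mem_erase hp)
  · exact (hSdeg x hx).trans <| card_filter_le_card_filter_of_exchange hst' (mem_insert_self _ _)
      hsub id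
  · exact (hTdeg y hy).trans <| card_filter_le_card_filter_of_exchange hs't
      (mem_insert_of_mem (mem_insert_self _ _)) hsub id

theorem mmCost_exchange {M : Finset (ℝ × ℝ)} {s t s' t' : ℝ} (hst : (s, t) ∈ M)
    (hst' : (s, t') ∉ M) (hs't : (s', t) ∉ M) (hne : (s, t') ≠ (s', t)) :
    mmCost (exchange M s t s' t') = mmCost M - |s - t| + |s' - t| + |s - t'| := by
  have hst'_new : (s, t') ∉ insert (s', t) (M.erase (s, t)) := by
    simp only [mem_insert, not_or]
    exact ⟨hne, fun h => hst' (mem_of_mem_erase h)⟩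
  rw [mmCost, exchange, sum_insert hst'_new, sum_insert fun h => hs't (mem_of_mem_erase h),
    sum_erase_eq_sub hst, mmCost]
  ring

theorem stmt_8_general (S T : Finset ℝ)
    (α β : ℝ → ℕ)
    (M : Finset (ℝ × ℝ)) (hM : IsMinOMMD S T α β M)
    (a c : ℝ) (hc : c ∈ S) (b d : ℝ) (hb : b ∈ T)
    (h1 : a ≤ b) (h2 : b < c) (h3 : c ≤ d)
    (had : (a, d) ∈ M) : (a, b) ∈ M ∨ (c, d) ∈ M := by
  by_contra! hcon
  obtain ⟨hab, hcd⟩ := hcon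
  have hne : (a, b) ≠ (c, d) := fun h => by simp only [Prod.mk.injEq] at h; linarith [h.1]
  have hcost : mmCost (exchange M a d c b) < mmCost M := by
    rw [mmCost_exchange had hab hcd hne, abs_of_nonpos (by linarith : a - d ≤ 0),
      abs_of_nonpos (by linarith : c - d ≤ 0), abs_of_nonpos (by linarith : a - b ≤ 0)]
    linarith
  exact hcost.not_ge (hM.2 _ (isOMMD_exchange hM.1 had hc hb hab hcd))

/-- In a minimum-cost OMMD `M`, for `a, c ∈ S` and `b, d ∈ T` with `a ≤ b < c ≤ d`,
if `(a, d) ∈ M` then `(a, b) ∈ M` or `(c, d) ∈ M` (or both). -/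
theorem stmt_8 (S T : Finset ℝ) (hdisj : Disjoint S T) (hS : S.Nonempty) (hT : T.Nonempty)
    (α β : ℝ → ℕ) (hα : ∀ s ∈ S, 1 ≤ α s) (hβ : ∀ t ∈ T, 1 ≤ β t)
    (M : Finset (ℝ × ℝ)) (hM : IsMinOMMD S T α β M)
    (a c : ℝ) (ha : a ∈ S) (hc : c ∈ S) (b d : ℝ) (hb : b ∈ T) (hd : d ∈ T)
    (h1 : a ≤ b) (h2 : b < c) (h3 : c ≤ d)
    (had : (a, d) ∈ M) : (a, b) ∈ M ∨ (c, d) ∈ M :=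
  stmt_8_general S T α β M hM a c hc b d hb h1 h2 h3 had
end

section
/- Let M be a minimum-cost OMMD between S and T. Let b, c ∈ S and a, d ∈ T satisfy a ≤ b < c ≤ d. If M contains both pairs (c, a) and (b, d), then M also contains (b, a) or (c, d) (or both). -/
/-
Uncrossing. Replacing the pairs `(c, a)` and `(b, d)` of `M` by `(b, a)` and `(c, d)` keeps every
point in the same number of pairs, so the result is again an OMMD as long as the two new pairs were
not already in `M`. Since `a ≤ b < c ≤ d`, this exchange lowers the cost by `2 (c - b) > 0`,
contradicting the minimality of `M`.
-/

open Finset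

namespace Finset

variable {ι β : Type*} [DecidableEq ι] [AddCommMonoid β]

theorem sum_insert_insert_erase_erase_add {s : Finset ι} {p q r w : ι} (f : ι → β)
    (hp : p ∈ s) (hq : q ∈ s) (hpq : p ≠ q) (hr : r ∉ s) (hw : w ∉ s) (hrw : r ≠ w) :
    ∑ x ∈ insert r (insert w ((s.erase p).erase q)), f x + (f p + f q) =
      ∑ x ∈ s, f x + (f r + f w) := by
  have hw' : w ∉ (s.erase p).erase q := fun h => hw (mem_of_mem_erase (mem_of_mem_erase h))
  have hr' : r ∉ insert w ((s.erase p).erase q) := by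
    rw [mem_insert, not_or]
    exact ⟨hrw, fun h => hr (mem_of_mem_erase (mem_of_mem_erase h))⟩
  rw [sum_insert hr', sum_insert hw', ← add_sum_erase s f hp,
    ← add_sum_erase (s.erase p) f (mem_erase.2 ⟨hpq.symm, hq⟩)]
  abel

end Finset

/-- The matching obtained from `M` by exchanging the partners of `(s, t)` and `(s', t')`. -/
noncomputable def swapPartners (M : Finset (ℝ × ℝ)) (s t s' t' : ℝ) : Finset (ℝ × ℝ) :=
  insert (s, t') (insert (s', t) ((M.erase (s, t)).erase (s', t')))

section swapPartners

variable {M : Finset (ℝ × ℝ)} {s t s' t' : ℝ}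

theorem card_filter_swapPartners (g : ℝ × ℝ → ℝ) (x : ℝ) (hst : (s, t) ∈ M)
    (hst' : (s', t') ∈ M) (hss' : s ≠ s') (hnew : (s, t') ∉ M) (hnew' : (s', t) ∉ M)
    (hg : g (s, t') = g (s, t) ∧ g (s', t) = g (s', t') ∨
      g (s, t') = g (s', t') ∧ g (s', t) = g (s, t)) :
    ((swapPartners M s t s' t').filter (fun p => g p = x)).card =
      (M.filter (fun p => g p = x)).card := by
  have hsum := sum_insert_insert_erase_erase_add (fun p => if g p = x then 1 else 0)
    hst hst' (by simp [hss']) hnew hnew' (by simp [hss'])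
  have hg' : ((if g (s, t) = x then 1 else 0) + if g (s', t') = x then 1 else 0) =
      (if g (s, t') = x then 1 else 0) + if g (s', t) = x then 1 else 0 := by
    rcases hg with ⟨h, h'⟩ | ⟨h, h'⟩ <;> rw [h, h']
    exact add_comm _ _
  rw [hg'] at hsum
  rw [card_filter, card_filter]
  exact add_right_cancel hsum

theorem IsOMMD.swapPartners {S T : Finset ℝ} {α β : ℝ → ℕ} (hM : IsOMMD S T α β M)
    (hst : (s, t) ∈ M) (hst' : (s', t') ∈ M) (hss' : s ≠ s')
    (hnew : (s, t') ∉ M) (hnew' : (s', t) ∉ M) :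
    IsOMMD S T α β (swapPartners M s t s' t') := by
  obtain ⟨hmem, hS, hT⟩ := hM
  refine ⟨fun p hp => ?_, fun x hx => ?_, fun y hy => ?_⟩
  · simp only [_root_.swapPartners, mem_insert] at hp
    rcases hp with rfl | rfl | hp
    · exact ⟨(hmem _ hst).1, (hmem _ hst').2⟩
    · exact ⟨(hmem _ hst').1, (hmem _ hst).2⟩
    · exact hmem p (mem_of_mem_erase (mem_of_mem_erase hp))
  · rw [card_filter_swapPartners Prod.fst x hst hst' hss' hnew hnew' (.inl ⟨rfl, rfl⟩)]
    exact hS x hx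
  · rw [card_filter_swapPartners Prod.snd y hst hst' hss' hnew hnew' (.inr ⟨rfl, rfl⟩)]
    exact hT y hy

theorem mmCost_swapPartners (hst : (s, t) ∈ M) (hst' : (s', t') ∈ M) (hss' : s ≠ s')
    (hnew : (s, t') ∉ M) (hnew' : (s', t) ∉ M) :
    mmCost (swapPartners M s t s' t') + (|s - t| + |s' - t'|) =
      mmCost M + (|s - t'| + |s' - t|) :=
  sum_insert_insert_erase_erase_add (fun p => |p.1 - p.2|) hst hst' (by simp [hss'])
    hnew hnew' (by simp [hss'])

end swapPartners

theorem IsMinOMMD.mem_or_mem_of_swap_lt {S T : Finset ℝ} {α β : ℝ → ℕ} {M : Finset (ℝ × ℝ)}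
    (hM : IsMinOMMD S T α β M) {s t s' t' : ℝ} (hst : (s, t) ∈ M) (hst' : (s', t') ∈ M)
    (hss' : s ≠ s') (hlt : |s - t'| + |s' - t| < |s - t| + |s' - t'|) :
    (s, t') ∈ M ∨ (s', t) ∈ M := by
  by_contra! hnew
  have hle := hM.2 _ (hM.1.swapPartners hst hst' hss' hnew.1 hnew.2)
  have hcost := mmCost_swapPartners hst hst' hss' hnew.1 hnew.2
  linarith

theorem stmt_10_general (S T : Finset ℝ) (α β : ℝ → ℕ)
    (M : Finset (ℝ × ℝ)) (hM : IsMinOMMD S T α β M)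
    (b c : ℝ) (a d : ℝ)
    (h1 : a ≤ b) (h2 : b < c) (h3 : c ≤ d)
    (hca : (c, a) ∈ M) (hbd : (b, d) ∈ M) : (b, a) ∈ M ∨ (c, d) ∈ M := by
  have hlt : |c - d| + |b - a| < |c - a| + |b - d| := by
    rw [abs_of_nonpos (by linarith : c - d ≤ 0), abs_of_nonneg (by linarith : 0 ≤ b - a),
      abs_of_nonneg (by linarith : 0 ≤ c - a), abs_of_nonpos (by linarith : b - d ≤ 0)]
    linarith
  exact (hM.mem_or_mem_of_swap_lt hca hbd h2.ne' hlt).symm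

/-- In a minimum-cost OMMD `M`, for `b, c ∈ S` and `a, d ∈ T` with `a ≤ b < c ≤ d`,
if both `(c, a)` and `(b, d)` belong to `M` then `(b, a) ∈ M` or `(c, d) ∈ M`
(or both). -/
theorem stmt_10 (S T : Finset ℝ) (hdisj : Disjoint S T) (hS : S.Nonempty) (hT : T.Nonempty)
    (α β : ℝ → ℕ) (hα : ∀ s ∈ S, 1 ≤ α s) (hβ : ∀ t ∈ T, 1 ≤ β t)
    (M : Finset (ℝ × ℝ)) (hM : IsMinOMMD S T α β M)
    (b c : ℝ) (hb : b ∈ S) (hc : c ∈ S) (a d : ℝ) (ha : a ∈ T) (hd : d ∈ T)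
    (h1 : a ≤ b) (h2 : b < c) (h3 : c ≤ d)
    (hca : (c, a) ∈ M) (hbd : (b, d) ∈ M) : (b, a) ∈ M ∨ (c, d) ∈ M :=
  stmt_10_general S T α β M hM b c a d h1 h2 h3 hca hbd
end
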